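/- arXiv:1502.01553 — 5 statements merged into one kernel-verified Lean document; each statement's English description precedes it below -/
import Mathlib

section
/- Let T be a parallelogram with vertices v1=(0,0), v2=(h1,0), v3=(h1+k·h2, h2), v4=(k·h2, h2) ordered counterclockwise, with h1, h2 > 0 and k ∈ ℝ. Define the bilinear (Wachspress) coordinates λ1=(h1−x+ky)(h2−y)/(h1h2), λ2=(x−ky)(h2−y)/(h1h2), λ3=(x−ky)y/(h1h2), λ4=(h1−x+ky)y/(h1h2). Then at every point (x,y): det[∇λ1, ∇λ2] + det[∇λ3, ∇λ4] = 1/|T| and det[∇λ2, ∇λ3] + det[∇λ4, ∇λ1] = 1/|T|, where |T| = h1·h2 is the area of T. -/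
/-- 2D determinant of two column vectors. -/
def det2 (u w : ℝ × ℝ) : ℝ := u.1 * w.2 - u.2 * w.1

/-- Gradient of a scalar function on `ℝ × ℝ`. -/
noncomputable def grad2 (f : ℝ × ℝ → ℝ) (p : ℝ × ℝ) : ℝ × ℝ :=
  (fderiv ℝ f p (1, 0), fderiv ℝ f p (0, 1))

lemma hasF (c0 c1 c2 c3 c4 : ℝ) (p : ℝ × ℝ) :
    HasFDerivAt (fun q : ℝ × ℝ => c0 + c1*q.1 + c2*q.2 + c3*(q.1*q.2) + c4*(q.2*q.2))
      ((c1 + c3*p.2) • (ContinuousLinearMap.fst ℝ ℝ ℝ)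
        + (c2 + c3*p.1 + 2*c4*p.2) • (ContinuousLinearMap.snd ℝ ℝ ℝ)) p := by
  have h1 : HasFDerivAt (fun q : ℝ × ℝ => q.1) (ContinuousLinearMap.fst ℝ ℝ ℝ) p :=
    hasFDerivAt_fst
  have h2 : HasFDerivAt (fun q : ℝ × ℝ => q.2) (ContinuousLinearMap.snd ℝ ℝ ℝ) p :=
    hasFDerivAt_snd
  have H := ((((hasFDerivAt_const c0 p).add (h1.const_mul c1)).add (h2.const_mul c2)).add
      ((h1.mul h2).const_mul c3)).add ((h2.mul h2).const_mul c4)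
  refine H.congr_fderiv ?_
  apply ContinuousLinearMap.ext
  intro v
  simp
  ring

lemma grad_poly (c0 c1 c2 c3 c4 : ℝ) (p : ℝ × ℝ) :
    grad2 (fun q : ℝ × ℝ => c0 + c1*q.1 + c2*q.2 + c3*(q.1*q.2) + c4*(q.2*q.2)) p
      = (c1 + c3*p.2, c2 + c3*p.1 + 2*c4*p.2) := by
  rw [grad2, (hasF c0 c1 c2 c3 c4 p).fderiv]
  simp

/-- On the parallelogram with vertices `(0,0), (h1,0), (h1+k·h2,h2), (k·h2,h2)`,
the bilinear (Wachspress) coordinates satisfy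
`det[∇λ1,∇λ2] + det[∇λ3,∇λ4] = 1/|T|` and `det[∇λ2,∇λ3] + det[∇λ4,∇λ1] = 1/|T|`,
where `|T| = h1·h2`. -/
theorem stmt1 (h1 h2 k : ℝ) (hh1 : 0 < h1) (hh2 : 0 < h2)
    (lam1 lam2 lam3 lam4 : ℝ × ℝ → ℝ)
    (hl1 : ∀ p : ℝ × ℝ, lam1 p = (h1 - p.1 + k * p.2) * (h2 - p.2) / (h1 * h2))
    (hl2 : ∀ p : ℝ × ℝ, lam2 p = (p.1 - k * p.2) * (h2 - p.2) / (h1 * h2))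
    (hl3 : ∀ p : ℝ × ℝ, lam3 p = (p.1 - k * p.2) * p.2 / (h1 * h2))
    (hl4 : ∀ p : ℝ × ℝ, lam4 p = (h1 - p.1 + k * p.2) * p.2 / (h1 * h2)) :
    ∀ p : ℝ × ℝ,
      det2 (grad2 lam1 p) (grad2 lam2 p) + det2 (grad2 lam3 p) (grad2 lam4 p)
        = 1 / (h1 * h2) ∧
      det2 (grad2 lam2 p) (grad2 lam3 p) + det2 (grad2 lam4 p) (grad2 lam1 p)
        = 1 / (h1 * h2) := by
  have hD : h1 * h2 ≠ 0 := by positivity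
  intro p
  have e1 : lam1 = fun q : ℝ × ℝ => (h1*h2/(h1*h2)) + (-h2/(h1*h2))*q.1
      + ((k*h2 - h1)/(h1*h2))*q.2 + (1/(h1*h2))*(q.1*q.2) + (-k/(h1*h2))*(q.2*q.2) := by
    funext q; rw [hl1]; field_simp; ring
  have e2 : lam2 = fun q : ℝ × ℝ => (0:ℝ) + (h2/(h1*h2))*q.1
      + (-(k*h2)/(h1*h2))*q.2 + (-1/(h1*h2))*(q.1*q.2) + (k/(h1*h2))*(q.2*q.2) := by
    funext q; rw [hl2]; field_simp; ring
  have e3 : lam3 = fun q : ℝ × ℝ => (0:ℝ) + (0:ℝ)*q.1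
      + (0:ℝ)*q.2 + (1/(h1*h2))*(q.1*q.2) + (-k/(h1*h2))*(q.2*q.2) := by
    funext q; rw [hl3]; field_simp; ring
  have e4 : lam4 = fun q : ℝ × ℝ => (0:ℝ) + (0:ℝ)*q.1
      + (h1/(h1*h2))*q.2 + (-1/(h1*h2))*(q.1*q.2) + (k/(h1*h2))*(q.2*q.2) := by
    funext q; rw [hl4]; field_simp; ring
  rw [e1, e2, e3, e4, grad_poly, grad_poly, grad_poly, grad_poly]
  constructor <;> · simp only [det2]; field_simp; ring
end

section
/- Let T be a convex polygon with counterclockwise vertices v1,…,vn and generalized barycentric coordinates λ1,…,λn satisfying the Lagrange property λi(vj)=δij and piecewise linearity on ∂T. With x* interior to T, b_{i,l} = δ_{il}|e_l| − |e_i||T_l|/|T|, c_{i,0} = |e_i|/(2|T|), and c_{i,k} = −(1/n)Σ_{l=1}^{n−1} l·b_{i,k+l}, define q_i = c_{i,0}(x − x*) + Σ_{k=1}^n c_{i,k} curl λ_k, where curl φ = (−∂_y φ, ∂_x φ). Then for every edge e_j, the normal component q_i · n_j restricted to e_j is identically equal to δ_{ij}. -/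
/-- 2D dot product. -/
def dot2 (u w : ℝ × ℝ) : ℝ := u.1 * w.1 + u.2 * w.2

/-- Euclidean length of a vector in `ℝ × ℝ`. -/
noncomputable def elen (u : ℝ × ℝ) : ℝ := Real.sqrt (u.1 ^ 2 + u.2 ^ 2)

/-- 2D curl of a scalar function: `curl φ = (−∂_y φ, ∂_x φ)`. -/
noncomputable def cgrad (f : ℝ × ℝ → ℝ) (p : ℝ × ℝ) : ℝ × ℝ :=
  (-(fderiv ℝ f p (0, 1)), fderiv ℝ f p (1, 0))

lemma sub1val (n : ℕ) [NeZero n] (hn : 3 ≤ n) (m : Fin n) :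
    ((m - 1 : Fin n).val : ℝ) = (if m = 0 then (n : ℝ) else (m.val : ℝ)) - 1 := by
  have h1 : ((1 : Fin n)).val = 1 := by
    rw [Fin.val_one']; exact Nat.mod_eq_of_lt (by omega)
  have hsub : (m - 1 : Fin n).val = (n - 1 + m.val) % n := by
    rw [Fin.sub_def, h1]
  rcases eq_or_ne m 0 with h | h
  · subst h
    rw [hsub]
    simp only [Fin.val_zero, Nat.add_zero, if_pos rfl]
    rw [Nat.mod_eq_of_lt (by omega)]
    push_cast [Nat.cast_sub (show (1:ℕ) ≤ n by omega)]
    ring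
  · have hv : 1 ≤ m.val := by
      rcases Nat.eq_zero_or_pos m.val with h0 | h0
      · exact absurd (Fin.ext h0) h
      · exact h0
    rw [hsub, if_neg h]
    have he : n - 1 + m.val = (m.val - 1) + n := by omega
    rw [he, Nat.add_mod_right, Nat.mod_eq_of_lt (by omega)]
    push_cast [Nat.cast_sub hv]
    ring

lemma telescope (n : ℕ) [NeZero n] (hn : 3 ≤ n) (F : Fin n → ℝ) :
    (∑ l : Fin n, (l.val : ℝ) * F (1 + l)) - (∑ l : Fin n, (l.val : ℝ) * F l)
      = (n : ℝ) * F 0 - ∑ l : Fin n, F l := by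
  have h1 : (∑ l : Fin n, (l.val : ℝ) * F (1 + l))
      = ∑ m : Fin n, (((m - 1 : Fin n).val : ℝ)) * F m := by
    refine Fintype.sum_equiv (Equiv.addLeft (1 : Fin n)) _ _ (fun l => ?_)
    simp [Equiv.addLeft]
  rw [h1, ← Finset.sum_sub_distrib]
  have h2 : ∀ m : Fin n, ((m - 1 : Fin n).val : ℝ) * F m - (m.val : ℝ) * F m
      = (if m = 0 then (n : ℝ) * F m else 0) - F m := by
    intro m
    rw [sub1val n hn m]
    rcases eq_or_ne m 0 with h | h <;> simp [h] <;> ring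
  simp_rw [h2]
  rw [Finset.sum_sub_distrib, Finset.sum_ite_eq' Finset.univ (0 : Fin n)]
  simp

lemma dot2_add (u w z : ℝ × ℝ) : dot2 (u + w) z = dot2 u z + dot2 w z := by
  simp [dot2]; ring

lemma dot2_smul (r : ℝ) (u z : ℝ × ℝ) : dot2 (r • u) z = r * dot2 u z := by
  simp [dot2]; ring

lemma dot2_sum {ι : Type*} (s : Finset ι) (f : ι → ℝ × ℝ) (z : ℝ × ℝ) :
    dot2 (∑ k ∈ s, f k) z = ∑ k ∈ s, dot2 (f k) z := by
  induction s using Finset.cons_induction with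
  | empty => simp [dot2]
  | cons a s ha ih => rw [Finset.sum_cons, Finset.sum_cons, dot2_add, ih]

/-- On a convex polygon with counterclockwise vertices `v 0, …, v (n-1)`,
generalized barycentric coordinates `lam` (Lagrange property, piecewise linear on
the boundary, expressed via the edge directional derivatives), interior point `xstar`,
and the coefficients `b`, `c₀`, `c` of the paper, the vector fields
`q i = c₀ i (x − x*) + Σ_k c i k curl λ_k` satisfy `q i · n_j ≡ δ_{ij}` on each edge `e_j`.
(The sum `Σ_{l : Fin n} l · b_{i,k+l}` equals `Σ_{l=1}^{n-1} l · b_{i,k+l}` since the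
`l = 0` term vanishes; indices are cyclic in `Fin n`.) -/
theorem stmt5 (n : ℕ) [NeZero n] (hn : 3 ≤ n)
    (v : Fin n → ℝ × ℝ) (xstar : ℝ × ℝ)
    (lam : Fin n → ℝ × ℝ → ℝ)
    (hdiff : ∀ k, Differentiable ℝ (lam k))
    (hlag : ∀ i j, lam i (v j) = if i = j then 1 else 0)
    (hedge : ∀ k j, ∀ p ∈ segment ℝ (v j) (v (j + 1)),
      fderiv ℝ (lam k) p (v (j + 1) - v j)
        = (if k = j + 1 then 1 else 0) - (if k = j then 1 else 0))
    (len : Fin n → ℝ) (hlen : ∀ j, len j = elen (v (j + 1) - v j))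
    (hlenpos : ∀ j, 0 < len j)
    (A : Fin n → ℝ) (hA : ∀ j, A j = det2 (v j - xstar) (v (j + 1) - xstar) / 2)
    (hApos : ∀ j, 0 < A j)
    (Atot : ℝ) (hAtot : Atot = ∑ j, A j)
    (b : Fin n → Fin n → ℝ)
    (hb : ∀ i l, b i l = (if i = l then len l else 0) - len i * (A l / Atot))
    (c0 : Fin n → ℝ) (hc0 : ∀ i, c0 i = len i / (2 * Atot))
    (c : Fin n → Fin n → ℝ)
    (hc : ∀ i k, c i k = -(1 / (n : ℝ)) * ∑ l : Fin n, (l.val : ℝ) * b i (k + l))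
    (q : Fin n → ℝ × ℝ → ℝ × ℝ)
    (hq : ∀ i p, q i p = c0 i • (p - xstar) + ∑ k, c i k • cgrad (lam k) p)
    (nv : Fin n → ℝ × ℝ)
    (hnv : ∀ j, nv j = (1 / len j) • ((v (j + 1) - v j).2, -(v (j + 1) - v j).1)) :
    ∀ i j, ∀ p ∈ segment ℝ (v j) (v (j + 1)),
      dot2 (q i p) (nv j) = if i = j then 1 else 0 := by
  intro i j p hp
  have hAtotpos : 0 < Atot := by
    rw [hAtot]
    exact Finset.sum_pos (fun k _ => hApos k) Finset.univ_nonempty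
  have hAtot0 : Atot ≠ 0 := ne_of_gt hAtotpos
  have hlj0 : len j ≠ 0 := ne_of_gt (hlenpos j)
  have hn0 : (n : ℝ) ≠ 0 := by positivity
  -- sum of b i over all second indices is 0
  have hbsum0 : (∑ l : Fin n, b i l) = 0 := by
    simp_rw [hb, Finset.sum_sub_distrib]
    rw [Finset.sum_ite_eq Finset.univ i]
    simp only [Finset.mem_univ, if_pos]
    rw [← Finset.mul_sum, ← Finset.sum_div, ← hAtot, div_self hAtot0]
    ring
  have hbsum : (∑ l : Fin n, b i (j + l)) = 0 := by
    rw [← hbsum0]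
    exact Fintype.sum_equiv (Equiv.addLeft j) _ _ (fun l => by simp [Equiv.addLeft])
  -- key identity
  have hkey : c i (j + 1) - c i j = - b i j := by
    rw [hc, hc]
    have hre : ∀ l : Fin n, (j + 1) + l = j + (1 + l) := fun l => by
      rw [add_assoc]
    simp_rw [hre]
    have ht := telescope n hn (fun m => b i (j + m))
    simp only [add_zero] at ht
    rw [hbsum, sub_zero] at ht
    rw [← mul_sub, ht]
    field_simp
  -- geometry
  have hgeo : dot2 (p - xstar) (nv j) = 2 * A j / len j := by
    obtain ⟨a, b', ha, hb', hab, hpe⟩ := hp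
    have hb'' : b' = 1 - a := by linarith
    subst hb''
    rw [← hpe, hnv, hA]
    simp only [dot2, Prod.smul_fst, Prod.smul_snd, Prod.fst_sub, Prod.snd_sub,
      Prod.fst_add, Prod.snd_add, smul_eq_mul, det2]
    field_simp
    ring
  -- curl term
  have hcurl : ∀ k, dot2 (cgrad (lam k) p) (nv j)
      = ((if k = j then 1 else 0) - (if k = j + 1 then 1 else 0)) / len j := by
    intro k
    have hd : fderiv ℝ (lam k) p (v (j + 1) - v j)
        = (v (j + 1) - v j).1 * fderiv ℝ (lam k) p (1, 0)
          + (v (j + 1) - v j).2 * fderiv ℝ (lam k) p (0, 1) := by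
      have hvec : (v (j + 1) - v j)
          = (v (j + 1) - v j).1 • ((1:ℝ), (0:ℝ)) + (v (j + 1) - v j).2 • ((0:ℝ), (1:ℝ)) := by
        simp [Prod.ext_iff]
      rw [hvec, map_add, map_smul, map_smul]
      simp
    have he := hedge k j p hp
    have h2 : dot2 (cgrad (lam k) p) (nv j)
        = -(fderiv ℝ (lam k) p (v (j + 1) - v j)) / len j := by
      rw [hd, hnv]
      simp only [cgrad, dot2, Prod.smul_fst, Prod.smul_snd, smul_eq_mul]
      ring
    rw [h2, he]
    ring
  -- assemble
  rw [hq, dot2_add, dot2_smul, dot2_sum, hgeo]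
  simp_rw [dot2_smul]
  simp_rw [hcurl]
  have hsum2 : (∑ k, c i k * (((if k = j then 1 else 0) - (if k = j + 1 then 1 else 0)) / len j))
      = (c i j - c i (j + 1)) / len j := by
    have hterm : ∀ k : Fin n, c i k * (((if k = j then 1 else 0) - (if k = j + 1 then 1 else 0)) / len j)
        = (if k = j then c i k else 0) / len j - (if k = j + 1 then c i k else 0) / len j := by
      intro k
      split_ifs <;> ring
    simp_rw [hterm]
    rw [Finset.sum_sub_distrib, ← Finset.sum_div, ← Finset.sum_div,
      Finset.sum_ite_eq' Finset.univ j, Finset.sum_ite_eq' Finset.univ (j + 1)]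
    simp [sub_div]
  rw [hsum2]
  have : c i j - c i (j + 1) = b i j := by linarith [hkey]
  rw [this, hc0, hb]
  rcases eq_or_ne i j with h | h
  · subst h; simp only [if_pos rfl]
    field_simp
    rw [if_pos trivial, if_pos trivial]
    ring
  · simp only [if_neg h]
    field_simp
    ring
end

section
/- Let M be an n×n real matrix that is irreducible and weakly diagonally dominant (|M_{ii}| ≥ Σ_{j≠i}|M_{ij}| for all i). Then rank(M) ≥ n − 1; that is, M either is invertible or has a kernel of dimension exactly 1. -/
private lemma stmt12_step (n : ℕ) (M : Matrix (Fin n) (Fin n) ℝ)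
    (hdd : ∀ i, ∑ j ∈ Finset.univ.erase i, |M i j| ≤ |M i i|)
    (x : Fin n → ℝ) (hx : M.mulVec x = 0) (cmax : ℝ)
    (hle : ∀ k, |x k| ≤ cmax)
    (i : Fin n) (hi : |x i| = cmax) (j : Fin n) (hij : M i j ≠ 0) :
    |x j| = cmax := by
  by_cases hji : j = i
  · rwa [hji]
  · have h0 : ∑ k, M i k * x k = 0 := congrFun hx i
    have hsplit : M i i * x i + ∑ k ∈ Finset.univ.erase i, M i k * x k = 0 := by
      rw [← Finset.add_sum_erase _ _ (Finset.mem_univ i)] at h0; exact h0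
    have habs : |M i i| * |x i| ≤ ∑ k ∈ Finset.univ.erase i, |M i k| * |x k| := by
      have : M i i * x i = -∑ k ∈ Finset.univ.erase i, M i k * x k := by linarith
      calc |M i i| * |x i| = |M i i * x i| := (abs_mul _ _).symm
        _ = |∑ k ∈ Finset.univ.erase i, M i k * x k| := by rw [this, abs_neg]
        _ ≤ ∑ k ∈ Finset.univ.erase i, |M i k * x k| := Finset.abs_sum_le_sum_abs _ _
        _ = ∑ k ∈ Finset.univ.erase i, |M i k| * |x k| :=
            Finset.sum_congr rfl fun k _ => abs_mul _ _
    have hub : ∑ k ∈ Finset.univ.erase i, |M i k| * |x k|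
        ≤ ∑ k ∈ Finset.univ.erase i, |M i k| * cmax :=
      Finset.sum_le_sum fun k _ => mul_le_mul_of_nonneg_left (hle k) (abs_nonneg _)
    have hub2 : ∑ k ∈ Finset.univ.erase i, |M i k| * cmax ≤ |M i i| * |x i| := by
      rw [← Finset.sum_mul, hi]
      exact mul_le_mul_of_nonneg_right (hdd i) (hi ▸ abs_nonneg (x i))
    have heq : ∑ k ∈ Finset.univ.erase i, |M i k| * |x k|
        = ∑ k ∈ Finset.univ.erase i, |M i k| * cmax := le_antisymm hub (by linarith)
    have hall := (Finset.sum_eq_sum_iff_of_le (fun k _ =>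
      mul_le_mul_of_nonneg_left (hle k) (abs_nonneg (M i k)))).mp heq
    have hj := hall j (Finset.mem_erase.mpr ⟨hji, Finset.mem_univ j⟩)
    have hne : |M i j| ≠ 0 := abs_ne_zero.mpr hij
    cases mul_eq_mul_left_iff.mp hj with
    | inl h => exact h
    | inr h => exact absurd h hne

/-- Any kernel vector of an irreducible weakly diagonally dominant matrix has constant
absolute value. -/
private lemma stmt12_const (n : ℕ) (M : Matrix (Fin n) (Fin n) ℝ)
    (hirr : ∀ i j : Fin n, ∃ (m : ℕ) (c : Fin (m + 1) → Fin n),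
      c 0 = i ∧ c (Fin.last m) = j ∧
      ∀ t : Fin m, M (c t.castSucc) (c t.succ) ≠ 0)
    (hdd : ∀ i, ∑ j ∈ Finset.univ.erase i, |M i j| ≤ |M i i|)
    (x : Fin n → ℝ) (hx : M.mulVec x = 0) (i j : Fin n) :
    |x i| = |x j| := by
  obtain ⟨i₀, -, hmax⟩ := Finset.exists_max_image Finset.univ (fun k => |x k|)
    ⟨i, Finset.mem_univ i⟩
  set cmax := |x i₀| with hc
  have hle : ∀ k, |x k| ≤ cmax := fun k => hmax k (Finset.mem_univ k)
  -- every index has |x ·| = cmax via a path from i₀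
  have hall : ∀ j, |x j| = cmax := by
    intro j
    obtain ⟨m, c, hc0, hcl, hedge⟩ := hirr i₀ j
    have key : ∀ k : ℕ, (hk : k < m + 1) → |x (c ⟨k, hk⟩)| = cmax := by
      intro k
      induction k with
      | zero => intro hk; simp [show (⟨0, hk⟩ : Fin (m+1)) = 0 from rfl, hc0, hc]
      | succ p ih =>
        intro hk
        have hp : p < m + 1 := Nat.lt_of_succ_lt hk
        have hpm : p < m := Nat.succ_lt_succ_iff.mp hk
        have := hedge ⟨p, hpm⟩
        have hcs : (⟨p, hpm⟩ : Fin m).castSucc = ⟨p, hp⟩ := rfl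
        have hss : (⟨p, hpm⟩ : Fin m).succ = ⟨p + 1, hk⟩ := rfl
        rw [hcs, hss] at this
        exact stmt12_step n M hdd x hx cmax hle _ (ih hp) _ this
    have := key m (Nat.lt_succ_self m)
    rwa [show (⟨m, Nat.lt_succ_self m⟩ : Fin (m+1)) = Fin.last m from rfl, hcl] at this
  rw [hall i, hall j]

/-- An irreducible, weakly diagonally dominant real `n×n` matrix has rank at least
`n − 1` (it is either invertible or has a one-dimensional kernel). Irreducibility is
expressed as strong connectivity of the directed adjacency graph of nonzero entries. -/
theorem stmt12 (n : ℕ) (M : Matrix (Fin n) (Fin n) ℝ)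
    (hirr : ∀ i j : Fin n, ∃ (m : ℕ) (c : Fin (m + 1) → Fin n),
      c 0 = i ∧ c (Fin.last m) = j ∧
      ∀ t : Fin m, M (c t.castSucc) (c t.succ) ≠ 0)
    (hdd : ∀ i, ∑ j ∈ Finset.univ.erase i, |M i j| ≤ |M i i|) :
    n - 1 ≤ M.rank := by
  rcases Nat.eq_zero_or_pos n with hn | hn
  · simp [hn]
  have i₀ : Fin n := ⟨0, hn⟩
  have hrn : M.rank + Module.finrank ℝ (LinearMap.ker M.mulVecLin) = n := by
    have := LinearMap.finrank_range_add_finrank_ker M.mulVecLin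
    rw [Module.finrank_fintype_fun_eq_card, Fintype.card_fin] at this
    exact this
  have hker : Module.finrank ℝ (LinearMap.ker M.mulVecLin) ≤ 1 := by
    by_cases hbot : LinearMap.ker M.mulVecLin = ⊥
    · rw [hbot]; simp
    · obtain ⟨x, hxk, hx0⟩ := Submodule.exists_mem_ne_zero_of_ne_bot hbot
      have hxker : M.mulVec x = 0 := hxk
      have hconst := stmt12_const n M hirr hdd
      have hxi₀ : x i₀ ≠ 0 := by
        intro h
        apply hx0
        funext k
        have := hconst x hxker k i₀
        rw [h, abs_zero, abs_eq_zero] at this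
        exact this
      have hsub : LinearMap.ker M.mulVecLin ≤ Submodule.span ℝ {x} := by
        intro y hy
        have hyker : M.mulVec y = 0 := hy
        set z : Fin n → ℝ := y - (y i₀ / x i₀) • x with hz
        have hzker : M.mulVec z = 0 := by
          have : z = y - (y i₀ / x i₀) • x := rfl
          rw [this, Matrix.mulVec_sub, Matrix.mulVec_smul, hyker, hxker, smul_zero,
            sub_zero]
        have hzi₀ : z i₀ = 0 := by
          simp only [hz, Pi.sub_apply, Pi.smul_apply, smul_eq_mul]
          field_simp
          simp
        have hzzero : z = 0 := by
          funext k
          have := hconst z hzker k i₀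
          rw [hzi₀, abs_zero, abs_eq_zero] at this
          exact this
        have : y = (y i₀ / x i₀) • x := by
          have := sub_eq_zero.mp hzzero
          exact this
        rw [this]
        exact Submodule.smul_mem _ _ (Submodule.mem_span_singleton_self x)
      calc Module.finrank ℝ (LinearMap.ker M.mulVecLin)
          ≤ Module.finrank ℝ (Submodule.span ℝ {x}) := Submodule.finrank_mono hsub
        _ = 1 := finrank_span_singleton hx0
  omega
end

section
/- Let T be a convex polyhedron with #V vertices, #E edges, #F faces, and incidence matrices A^{VtoE}, A^{FtoE} as above. Then ker((A^{FtoE})^t) = range(A^{VtoE}) and ker((A^{VtoE})^t) = range(A^{FtoE}). In particular the block matrix A = [A^{VtoE} A^{FtoE}] ∈ ℝ^{#E×(#V+#F)} has rank #E, and its kernel is 2-dimensional, spanned by (1,…,1,0,…,0) and (0,…,0,1,…,1). -/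
open Matrix in
/-- Exactness of the incidence-matrix sequence of a convex polyhedron: given the
orthogonality `(A^{FtoE})ᵀ A^{VtoE} = 0`, the ranks `#V − 1`, `#F − 1` with the
all-ones vectors in the kernels, and Euler's formula `#V + #F = #E + 2`, one has
`ker((A^{FtoE})ᵀ) = range(A^{VtoE})`, `ker((A^{VtoE})ᵀ) = range(A^{FtoE})`, the block
matrix `A = [A^{VtoE} A^{FtoE}]` has rank `#E`, and its kernel consists exactly of the
vectors that are constant on the `V`-block and constant on the `F`-block. -/
theorem stmt15 (Vn En Fn : ℕ) (hV : 1 ≤ Vn) (hF : 1 ≤ Fn)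
    (AV : Matrix (Fin En) (Fin Vn) ℝ) (AF : Matrix (Fin En) (Fin Fn) ℝ)
    (horth : AFᵀ * AV = 0)
    (hrkV : AV.rank = Vn - 1) (hrkF : AF.rank = Fn - 1)
    (hkerV : AV.mulVec (fun _ => 1) = 0) (hkerF : AF.mulVec (fun _ => 1) = 0)
    (hEuler : Vn + Fn = En + 2) :
    LinearMap.ker AFᵀ.mulVecLin = LinearMap.range AV.mulVecLin ∧
    LinearMap.ker AVᵀ.mulVecLin = LinearMap.range AF.mulVecLin ∧
    (Matrix.of fun (e : Fin En) (i : Fin Vn ⊕ Fin Fn) => Sum.elim (AV e) (AF e) i).rank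
      = En ∧
    ∀ x : Fin Vn ⊕ Fin Fn → ℝ,
      (Matrix.of fun (e : Fin En) (i : Fin Vn ⊕ Fin Fn) =>
        Sum.elim (AV e) (AF e) i).mulVec x = 0 ↔
      ∃ a b : ℝ, x = Sum.elim (fun _ => a) (fun _ => b) := by
  have horth' : AVᵀ * AF = 0 := by
    have := congrArg Matrix.transpose horth
    simpa [Matrix.transpose_mul] using this
  have hrkVT : AVᵀ.rank = Vn - 1 := by rw [Matrix.rank_transpose, hrkV]
  have hrkFT : AFᵀ.rank = Fn - 1 := by rw [Matrix.rank_transpose, hrkF]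
  have hrnV := LinearMap.finrank_range_add_finrank_ker AV.mulVecLin
  have hrnF := LinearMap.finrank_range_add_finrank_ker AF.mulVecLin
  have hrnVT := LinearMap.finrank_range_add_finrank_ker AVᵀ.mulVecLin
  have hrnFT := LinearMap.finrank_range_add_finrank_ker AFᵀ.mulVecLin
  rw [Module.finrank_fin_fun] at hrnV hrnF hrnVT hrnFT
  have hfrV : Module.finrank ℝ (LinearMap.range AV.mulVecLin) = Vn - 1 := hrkV
  have hfrF : Module.finrank ℝ (LinearMap.range AF.mulVecLin) = Fn - 1 := hrkF
  have hfrVT : Module.finrank ℝ (LinearMap.range AVᵀ.mulVecLin) = Vn - 1 := hrkVT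
  have hfrFT : Module.finrank ℝ (LinearMap.range AFᵀ.mulVecLin) = Fn - 1 := hrkFT
  -- exactness 1
  have hle1 : LinearMap.range AV.mulVecLin ≤ LinearMap.ker AFᵀ.mulVecLin := by
    rintro _ ⟨v, rfl⟩
    have : (AFᵀ * AV).mulVecLin v = 0 := by rw [horth]; simp
    simpa [Matrix.mulVecLin_mul] using this
  have h1 : LinearMap.ker AFᵀ.mulVecLin = LinearMap.range AV.mulVecLin := by
    refine (Submodule.eq_of_le_of_finrank_eq hle1 ?_).symm
    rw [hfrV]; omega
  have hle2 : LinearMap.range AF.mulVecLin ≤ LinearMap.ker AVᵀ.mulVecLin := by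
    rintro _ ⟨v, rfl⟩
    have : (AVᵀ * AF).mulVecLin v = 0 := by rw [horth']; simp
    simpa [Matrix.mulVecLin_mul] using this
  have h2 : LinearMap.ker AVᵀ.mulVecLin = LinearMap.range AF.mulVecLin := by
    refine (Submodule.eq_of_le_of_finrank_eq hle2 ?_).symm
    rw [hfrF]; omega
  -- kernels are spanned by the all-ones vectors
  have honeV : (fun _ => (1:ℝ) : Fin Vn → ℝ) ≠ 0 := by
    intro h
    have := congrFun h ⟨0, hV⟩
    simpa using this
  have honeF : (fun _ => (1:ℝ) : Fin Fn → ℝ) ≠ 0 := by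
    intro h
    have := congrFun h ⟨0, hF⟩
    simpa using this
  have hkV : LinearMap.ker AV.mulVecLin = Submodule.span ℝ {(fun _ => (1:ℝ) : Fin Vn → ℝ)} := by
    symm
    apply Submodule.eq_of_le_of_finrank_eq
    · rw [Submodule.span_le, Set.singleton_subset_iff]
      simpa [LinearMap.mem_ker, Matrix.mulVecLin_apply] using hkerV
    · rw [finrank_span_singleton honeV]; omega
  have hkF : LinearMap.ker AF.mulVecLin = Submodule.span ℝ {(fun _ => (1:ℝ) : Fin Fn → ℝ)} := by
    symm
    apply Submodule.eq_of_le_of_finrank_eq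
    · rw [Submodule.span_le, Set.singleton_subset_iff]
      simpa [LinearMap.mem_ker, Matrix.mulVecLin_apply] using hkerF
    · rw [finrank_span_singleton honeF]; omega
  -- trivial intersection of ranges
  have hinf : LinearMap.range AV.mulVecLin ⊓ LinearMap.range AF.mulVecLin = ⊥ := by
    rw [eq_bot_iff]
    rintro w ⟨hw1, hw2⟩
    obtain ⟨v, hv⟩ := hw2
    have hker : AFᵀ.mulVec w = 0 := hle1 hw1
    have : dotProduct w w = 0 := by
      calc dotProduct w w = dotProduct w (AF.mulVec v) := by
            rw [← Matrix.mulVecLin_apply, hv]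
        _ = dotProduct (Matrix.vecMul w AF) v := Matrix.dotProduct_mulVec _ _ _
        _ = dotProduct (AFᵀ.mulVec w) v := by rw [Matrix.mulVec_transpose]
        _ = 0 := by rw [hker]; simp
    simpa using dotProduct_self_eq_zero.mp this
  -- block matrix
  set B := Matrix.of fun (e : Fin En) (i : Fin Vn ⊕ Fin Fn) => Sum.elim (AV e) (AF e) i with hB
  have hBmul : ∀ x : Fin Vn ⊕ Fin Fn → ℝ,
      B.mulVec x = AV.mulVec (x ∘ Sum.inl) + AF.mulVec (x ∘ Sum.inr) := by
    intro x; funext e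
    simp [hB, Matrix.mulVec, dotProduct, Fintype.sum_sum_type]
  have hrange : LinearMap.range B.mulVecLin
      = LinearMap.range AV.mulVecLin ⊔ LinearMap.range AF.mulVecLin := by
    apply le_antisymm
    · rintro _ ⟨x, rfl⟩
      rw [Matrix.mulVecLin_apply, hBmul]
      exact Submodule.add_mem _ (Submodule.mem_sup_left ⟨_, rfl⟩)
        (Submodule.mem_sup_right ⟨_, rfl⟩)
    · rw [sup_le_iff]
      constructor
      · rintro _ ⟨u, rfl⟩
        exact ⟨Sum.elim u 0, by rw [Matrix.mulVecLin_apply, hBmul]; simp⟩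
      · rintro _ ⟨v, rfl⟩
        exact ⟨Sum.elim 0 v, by rw [Matrix.mulVecLin_apply, hBmul]; simp⟩
  have hrkB : B.rank = En := by
    have h := Submodule.finrank_sup_add_finrank_inf_eq
      (LinearMap.range AV.mulVecLin) (LinearMap.range AF.mulVecLin)
    rw [hinf, hfrV, hfrF, finrank_bot] at h
    show Module.finrank ℝ (LinearMap.range B.mulVecLin) = En
    rw [hrange]; omega
  refine ⟨h1, h2, hrkB, fun x => ⟨fun hx => ?_, fun ⟨a, b, hab⟩ => ?_⟩⟩
  · rw [hBmul] at hx
    have hmem : AV.mulVec (x ∘ Sum.inl)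
        ∈ LinearMap.range AV.mulVecLin ⊓ LinearMap.range AF.mulVecLin := by
      refine ⟨⟨_, rfl⟩, ⟨-(x ∘ Sum.inr), ?_⟩⟩
      rw [Matrix.mulVecLin_apply, Matrix.mulVec_neg]
      exact (eq_neg_of_add_eq_zero_left hx).symm
    rw [hinf, Submodule.mem_bot] at hmem
    have hFv : AF.mulVec (x ∘ Sum.inr) = 0 := by
      rw [hmem, zero_add] at hx; exact hx
    have hu : (x ∘ Sum.inl) ∈ LinearMap.ker AV.mulVecLin := by
      simpa [LinearMap.mem_ker, Matrix.mulVecLin_apply] using hmem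
    have hv : (x ∘ Sum.inr) ∈ LinearMap.ker AF.mulVecLin := by
      simpa [LinearMap.mem_ker, Matrix.mulVecLin_apply] using hFv
    rw [hkV, Submodule.mem_span_singleton] at hu
    rw [hkF, Submodule.mem_span_singleton] at hv
    obtain ⟨a, ha⟩ := hu
    obtain ⟨b, hb⟩ := hv
    refine ⟨a, b, ?_⟩
    funext i
    cases i with
    | inl j =>
      have := congrFun ha j
      simpa using this.symm
    | inr j =>
      have := congrFun hb j
      simpa using this.symm
  · subst hab
    rw [hBmul]
    have h3 : ((Sum.elim (fun _ => a) (fun _ => b) : Fin Vn ⊕ Fin Fn → ℝ) ∘ Sum.inl)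
        = a • (fun _ => (1:ℝ)) := by funext j; simp
    have h4 : ((Sum.elim (fun _ => a) (fun _ => b) : Fin Vn ⊕ Fin Fn → ℝ) ∘ Sum.inr)
        = b • (fun _ => (1:ℝ)) := by funext j; simp
    rw [h3, h4, Matrix.mulVec_smul, Matrix.mulVec_smul, hkerV, hkerF]
    simp
end

section
/- Let T be a convex polygon in ℝ² with vertices v1,…,vn (counterclockwise) and generalized barycentric coordinates λi with the Lagrange and piecewise-linear-trace properties. Let Π_T denote the interpolation into span{q_1,…,q_n} defined by (Π_T q)·n_j|_{e_j} = (1/|e_j|)∫_{e_j} q·n_j ds, and let I_T φ = Σ_i φ(v_i)λ_i. Then for every φ ∈ W^{1,p}(T) with p > 2: Π_T(curl φ) = curl(I_T φ), where curl φ = (−∂_y φ, ∂_x φ). -/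
lemma dot2_cgrad (f : ℝ × ℝ → ℝ) (p : ℝ × ℝ) (d : ℝ × ℝ) (L : ℝ) :
    dot2 (cgrad f p) ((1/L) • (d.2, -d.1)) = -(1/L) * fderiv ℝ f p d := by
  have h : d = d.1 • ((1:ℝ), (0:ℝ)) + d.2 • ((0:ℝ), (1:ℝ)) := by
    simp [Prod.ext_iff]
  rw [show fderiv ℝ f p d = fderiv ℝ f p (d.1 • ((1:ℝ),(0:ℝ)) + d.2 • ((0:ℝ),(1:ℝ))) by rw [← h]]
  rw [map_add, map_smul, map_smul]
  simp [dot2, cgrad, Prod.smul_def, smul_eq_mul]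
  ring

lemma ftc_seg (f : ℝ × ℝ → ℝ) (hf : ContDiff ℝ 1 f) (a d : ℝ × ℝ) :
    ∫ s in (0:ℝ)..1, fderiv ℝ f (a + s • d) d = f (a + d) - f a := by
  have hder : ∀ s : ℝ, HasDerivAt (fun t : ℝ => f (a + t • d)) (fderiv ℝ f (a + s • d) d) s := by
    intro s
    have h1 : HasDerivAt (fun t : ℝ => a + t • d) d s := by
      simpa using ((hasDerivAt_id s).smul_const d).const_add a
    exact ((hf.differentiable one_ne_zero (a + s • d)).hasFDerivAt).comp_hasDerivAt s h1
  have hcont : Continuous fun s : ℝ => fderiv ℝ f (a + s • d) d := by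
    have h2 : Continuous fun p => fderiv ℝ f p := hf.continuous_fderiv one_ne_zero
    have h3 : Continuous fun s : ℝ => a + s • d := by continuity
    exact (h2.comp h3).clm_apply continuous_const
  have := intervalIntegral.integral_eq_sub_of_hasDerivAt (f := fun t : ℝ => f (a + t • d))
    (fun s _ => hder s) (hcont.intervalIntegrable 0 1)
  simpa using this

lemma dot2_addl (a b w : ℝ × ℝ) : dot2 (a + b) w = dot2 a w + dot2 b w := by
  simp [dot2]; ring

lemma dot2_smull (c : ℝ) (a w : ℝ × ℝ) : dot2 (c • a) w = c * dot2 a w := by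
  simp [dot2]; ring

/-- Commutativity `Π_T (curl φ) = curl (I_T φ)`: on a convex polygon with counterclockwise
vertices `v j`, generalized barycentric coordinates `lam` (Lagrange property, piecewise
linear traces expressed via edge directional derivatives), and H(div) basis functions
`q i` with `q i · n_j ≡ δ_{ij}` on edge `e_j` whose span contains every `curl λ_k`,
the edge-average interpolation `Π` (note `(1/|e_i|)∫_{e_i} F·n_i ds` equals the
parametrized integral `∫_0^1 F(v_i + s(v_{i+1}−v_i))·n_i ds`) and the nodal
interpolation `I_T φ = Σ_k φ(v_k) λ_k` satisfy `Π(curl φ) = curl(I_T φ)` for C¹ `φ`. -/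
theorem stmt16 (n : ℕ) [NeZero n] (hn : 3 ≤ n) (v : Fin n → ℝ × ℝ)
    (lam : Fin n → ℝ × ℝ → ℝ)
    (hdiff : ∀ k, Differentiable ℝ (lam k))
    (hlag : ∀ i j, lam i (v j) = if i = j then 1 else 0)
    (hedge : ∀ k j, ∀ p ∈ segment ℝ (v j) (v (j + 1)),
      fderiv ℝ (lam k) p (v (j + 1) - v j)
        = (if k = j + 1 then 1 else 0) - (if k = j then 1 else 0))
    (len : Fin n → ℝ) (hlen : ∀ j, len j = elen (v (j + 1) - v j))
    (hlenpos : ∀ j, 0 < len j)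
    (nv : Fin n → ℝ × ℝ)
    (hnv : ∀ j, nv j = (1 / len j) • ((v (j + 1) - v j).2, -(v (j + 1) - v j).1))
    (q : Fin n → ℝ × ℝ → ℝ × ℝ)
    (hq : ∀ i j, ∀ p ∈ segment ℝ (v j) (v (j + 1)),
      dot2 (q i p) (nv j) = if i = j then 1 else 0)
    (hspan : ∀ k, (fun p => cgrad (lam k) p) ∈ Submodule.span ℝ (Set.range q))
    (Pi : (ℝ × ℝ → ℝ × ℝ) → (ℝ × ℝ → ℝ × ℝ))
    (hPi : ∀ (G : ℝ × ℝ → ℝ × ℝ) (p : ℝ × ℝ), Pi G p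
      = ∑ i, (∫ s in (0:ℝ)..1, dot2 (G (v i + s • (v (i + 1) - v i))) (nv i)) • q i p)
    (phi : ℝ × ℝ → ℝ) (hphi : ContDiff ℝ 1 phi)
    (Iphi : ℝ × ℝ → ℝ) (hIphi : ∀ p, Iphi p = ∑ k, phi (v k) * lam k p) :
    ∀ p, Pi (fun x => cgrad phi x) p = cgrad Iphi p := by
  intro pt
  -- interpolation is identity on the span of the q's
  have key : ∀ x, x ∈ Submodule.span ℝ (Set.range q) →
      ∀ pt' : ℝ × ℝ, x pt' = ∑ i, dot2 (x (v i)) (nv i) • q i pt' := by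
    intro x hx
    induction hx using Submodule.span_induction with
    | mem x hxr =>
      obtain ⟨j, rfl⟩ := hxr
      intro pt'
      have h1 : ∀ i, dot2 (q j (v i)) (nv i) = if j = i then 1 else 0 := fun i =>
        hq j i (v i) (left_mem_segment ℝ _ _)
      simp only [h1, ite_smul, one_smul, zero_smul, Finset.sum_ite_eq, Finset.mem_univ, if_true]
    | zero => intro pt'; simp [dot2]
    | add x y hx hy ihx ihy =>
      intro pt'
      simp only [_root_.Pi.add_apply, dot2_addl, add_smul, Finset.sum_add_distrib]
      rw [ihx pt', ihy pt']
    | smul a x hx ihx =>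
      intro pt'
      simp only [_root_.Pi.smul_apply, dot2_smull, smul_eq_mul, mul_smul]
      rw [ihx pt', Finset.smul_sum]
  -- coefficient for cgrad phi
  have hcoef : ∀ i : Fin n, (∫ s in (0:ℝ)..1,
      dot2 (cgrad phi (v i + s • (v (i + 1) - v i))) (nv i))
      = -(1 / len i) * (phi (v (i + 1)) - phi (v i)) := by
    intro i
    have h1 : ∀ s : ℝ, dot2 (cgrad phi (v i + s • (v (i + 1) - v i))) (nv i)
        = -(1 / len i) * fderiv ℝ phi (v i + s • (v (i + 1) - v i)) (v (i + 1) - v i) := by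
      intro s; rw [hnv i]; exact dot2_cgrad _ _ _ _
    simp only [h1]
    rw [intervalIntegral.integral_const_mul, ftc_seg phi hphi, add_sub_cancel]
  -- representation of cgrad (lam k)
  have hlamrep : ∀ k : Fin n, cgrad (lam k) pt
      = ∑ i, (-(1 / len i) * ((if k = i + 1 then (1:ℝ) else 0) - (if k = i then 1 else 0)))
          • q i pt := by
    intro k
    have h1 := key _ (hspan k) pt
    have h2 : ∀ i : Fin n, dot2 (cgrad (lam k) (v i)) (nv i)
        = -(1 / len i) * ((if k = i + 1 then (1:ℝ) else 0) - (if k = i then 1 else 0)) := by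
      intro i
      rw [hnv i, dot2_cgrad, hedge k i (v i) (left_mem_segment ℝ _ _)]
    simp only [h2] at h1
    exact h1
  -- derivative of Iphi
  have hD : ∀ w, fderiv ℝ Iphi pt w = ∑ k, phi (v k) * fderiv ℝ (lam k) pt w := by
    have hF : HasFDerivAt Iphi (∑ k, phi (v k) • fderiv ℝ (lam k) pt) pt := by
      have he : Iphi = fun p => ∑ k, phi (v k) * lam k p := funext hIphi
      rw [he]
      exact HasFDerivAt.fun_sum fun k _ => ((hdiff k pt).hasFDerivAt).const_mul (phi (v k))
    intro w
    rw [hF.fderiv]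
    simp [ContinuousLinearMap.sum_apply]
  have hcg : cgrad Iphi pt = ∑ k, phi (v k) • cgrad (lam k) pt := by
    show (-(fderiv ℝ Iphi pt (0,1)), fderiv ℝ Iphi pt (1,0)) = _
    rw [hD, hD]
    simp [Prod.ext_iff, Prod.fst_sum, Prod.snd_sum, cgrad, smul_eq_mul, mul_neg,
      Finset.sum_neg_distrib]
  rw [hPi, hcg]
  simp only [hcoef, hlamrep, Finset.smul_sum, smul_smul]
  rw [Finset.sum_comm]
  refine Finset.sum_congr rfl fun i _ => ?_
  rw [← Finset.sum_smul]
  congr 1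
  have h3 : ∀ k : Fin n, phi (v k)
      * (-(1 / len i) * ((if k = i + 1 then (1:ℝ) else 0) - (if k = i then 1 else 0)))
      = -(1 / len i) * ((if k = i + 1 then phi (v k) else 0) - (if k = i then phi (v k) else 0)) := by
    intro k; split_ifs <;> ring
  simp only [h3]
  rw [← Finset.mul_sum, Finset.sum_sub_distrib, Finset.sum_ite_eq', Finset.sum_ite_eq']
  simp
end
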